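/- Let K be a local field and n a positive integer with char(K) ∤ n. Let g(x,y) = ∏_{j=1}^{r} g_j(P_j(x,y), Q_j(x,y)), where each g_j is a function K^*/(K^*)^n × K^*/(K^*)^n → ℂ and P_j, Q_j ∈ K[x,y] are nonzero homogeneous polynomials. Let R = {(x,y) ∈ K × K : min(v(x), v(y)) = 0}. Then for every t₀ ∈ ℙ¹(K) there is a punctured neighbourhood U_{t₀} of t₀ such that, for all (x,y) ∈ R with x/y ∈ U_{t₀} at which g is defined, the value of g(x,y) depends only on the classes of x − t₀·y and of y in K^*/(K^*)^n (only on the classes of x and of y if t₀ = ∞). -/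

import Mathlib

/-- A (nonarchimedean) local field structure on a field `K`: a discrete valuation
`v : K → ℤ ∪ {⊤}` (with `v 0 = ⊤`), normalized so that `v (K^*) = ℤ`, with respect to
which `K` is complete, and whose residue field is finite. -/
structure IsLocalField {K : Type*} [Field K] (v : K → WithTop ℤ) : Prop where
  map_zero : v 0 = ⊤
  ne_top : ∀ x : K, x ≠ 0 → v x ≠ ⊤
  map_mul : ∀ x y : K, v (x * y) = v x + v y
  min_le_add : ∀ x y : K, min (v x) (v y) ≤ v (x + y)
  exists_eq : ∀ k : ℤ, ∃ x : K, v x = (k : WithTop ℤ)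
  complete : ∀ a : ℕ → K,
      (∀ k : ℤ, ∃ N : ℕ, ∀ m m' : ℕ, N ≤ m → N ≤ m' → (k : WithTop ℤ) ≤ v (a m - a m')) →
      ∃ L : K, ∀ k : ℤ, ∃ N : ℕ, ∀ m : ℕ, N ≤ m → (k : WithTop ℤ) ≤ v (a m - L)
  finite_residue : ∃ T : Finset K, ∀ x : K, 0 ≤ v x → ∃ t ∈ T, (1 : WithTop ℤ) ≤ v (x - t)


/-!
Dehomogenising, `P(x, y) = y ^ d * p (x / y)`, and near `t₀` we write
`p t = (t - t₀) ^ m * h t` with `h t₀ ≠ 0`. Newton's iteration for `X ^ n = w` starting at `1`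
converges as soon as `v (w - 1) > 2 v(n)` (Hensel's lemma), so every value close enough to
`h t₀` lies in `h t₀ * (K^*)^n`. Hence near `t₀` the class of `p t` is the class of
`(t - t₀) ^ m`, which only depends on the classes of `x - t₀ y` and of `y`.
The point `t₀ = ∞` is the point `t₀ = 0` after exchanging `x` and `y`.
-/

open Polynomial

section PowEquiv

variable {K : Type*} [Field K]

def PowEquiv (n : ℕ) (a b : K) : Prop := ∃ s : K, s ≠ 0 ∧ a = s ^ n * b

variable {n : ℕ} {a b c a' b' : K}

theorem PowEquiv.refl (n : ℕ) (a : K) : PowEquiv n a a := ⟨1, one_ne_zero, by simp⟩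

theorem PowEquiv.symm : PowEquiv n a b → PowEquiv n b a := by
  rintro ⟨s, hs, rfl⟩
  exact ⟨s⁻¹, inv_ne_zero hs, by rw [inv_pow, inv_mul_cancel_left₀ (pow_ne_zero n hs)]⟩

theorem PowEquiv.trans : PowEquiv n a b → PowEquiv n b c → PowEquiv n a c := by
  rintro ⟨s, hs, rfl⟩ ⟨t, ht, rfl⟩
  exact ⟨s * t, mul_ne_zero hs ht, by ring⟩

theorem PowEquiv.mul : PowEquiv n a a' → PowEquiv n b b' → PowEquiv n (a * b) (a' * b') := by
  rintro ⟨s, hs, rfl⟩ ⟨t, ht, rfl⟩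
  exact ⟨s * t, mul_ne_zero hs ht, by ring⟩

theorem PowEquiv.div : PowEquiv n a a' → PowEquiv n b b' → PowEquiv n (a / b) (a' / b') := by
  rintro ⟨s, hs, rfl⟩ ⟨t, ht, rfl⟩
  exact ⟨s / t, div_ne_zero hs ht, by rw [div_pow]; field_simp⟩

theorem PowEquiv.pow (h : PowEquiv n a b) (d : ℕ) : PowEquiv n (a ^ d) (b ^ d) := by
  obtain ⟨s, hs, rfl⟩ := h
  exact ⟨s ^ d, pow_ne_zero d hs, by ring⟩

end PowEquiv

def newtonPowStep {K : Type*} [Field K] (n : ℕ) (w a : K) : K :=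
  a + (w - a ^ n) / (n * a ^ (n - 1))

namespace AddValuation

section CommRing

variable {R : Type*} [CommRing R] (v : AddValuation R (WithTop ℤ))

theorem map_natCast_nonneg (m : ℕ) : 0 ≤ v (m : R) := by
  simpa using v.map_le_sum (s := Finset.range m) (f := fun _ => (1 : R)) (g := 0)
    (fun _ _ => by simp [v.map_one])

theorem map_sub_le_map_pow_sub_pow {x y : R} (hx : 0 ≤ v x) (hy : 0 ≤ v y) (n : ℕ) :
    v (x - y) ≤ v (x ^ n - y ^ n) := by
  rw [← geom_sum₂_mul, v.map_mul]
  refine le_add_of_nonneg_left (v.map_le_sum fun i _ => ?_)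
  rw [v.map_mul, v.map_pow, v.map_pow]
  exact add_nonneg (nsmul_nonneg hx _) (nsmul_nonneg hy _)

theorem map_sq_le_map_add_pow_sub {a t : R} (ha : 0 ≤ v a) (ht : 0 ≤ v t) (n : ℕ) :
    v (t ^ 2) ≤ v ((a + t) ^ n - a ^ n - n * a ^ (n - 1) * t) := by
  obtain _ | m := n
  · simp [v.map_zero]
  induction m with
  | zero => simp [v.map_zero]
  | succ m ih =>
    have hrec : (a + t) ^ (m + 2) - a ^ (m + 2) - ((m + 2 : ℕ) : R) * a ^ (m + 1) * t =
        (a + t) * ((a + t) ^ (m + 1) - a ^ (m + 1) - ((m + 1 : ℕ) : R) * a ^ m * t) +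
          ((m + 1 : ℕ) : R) * a ^ m * t ^ 2 := by
      push_cast; ring
    simp only [Nat.add_sub_cancel] at ih ⊢
    rw [hrec]
    refine v.map_le_add ?_ ?_
    · rw [v.map_mul]
      exact le_add_of_nonneg_of_le (le_trans (min_le_min ha ht) (v.map_add a t)) ih
    · rw [v.map_mul, v.map_mul, v.map_pow a]
      exact le_add_of_nonneg_left (add_nonneg (v.map_natCast_nonneg _) (nsmul_nonneg ha _))

theorem le_map_sub_of_le_map_sub_succ {a : ℕ → R} {c : ℤ}
    (h : ∀ k : ℕ, ((c + k : ℤ) : WithTop ℤ) ≤ v (a (k + 1) - a k)) {m m' : ℕ} (hm : m ≤ m') :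
    ((c + m : ℤ) : WithTop ℤ) ≤ v (a m' - a m) := by
  induction m', hm using Nat.le_induction with
  | base => simp [v.map_zero]
  | succ m' hm ih =>
    rw [← sub_add_sub_cancel]
    exact v.map_le_add (le_trans (by exact_mod_cast by omega) (h m')) ih

theorem le_map_eval_of_le_map_coeff {p : R[X]} {C : ℤ}
    (hC : ∀ i, (C : WithTop ℤ) ≤ v (p.coeff i)) {u : R} (hu : 0 ≤ v u) :
    (C : WithTop ℤ) ≤ v (p.eval u) := by
  rw [eval_eq_sum_range]
  refine v.map_le_sum fun i _ => ?_
  rw [v.map_mul, v.map_pow]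
  exact le_add_of_le_of_nonneg (hC i) (nsmul_nonneg hu i)

end CommRing

variable {K : Type*} [Field K] (v : AddValuation K (WithTop ℤ))

theorem eq_zero_of_forall_coe_le {x : K} (h : ∀ k : ℤ, (k : WithTop ℤ) ≤ v x) : x = 0 := by
  by_contra hx
  obtain ⟨k, hk⟩ := WithTop.ne_top_iff_exists.mp ((v.ne_top_iff).mpr hx)
  exact absurd (h (k + 1)) (by rw [← hk]; exact_mod_cast (lt_add_one k).not_ge)

theorem le_map_inv {x : K} {k : ℤ} (h : v x ≤ ((-k : ℤ) : WithTop ℤ)) :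
    (k : WithTop ℤ) ≤ v x⁻¹ := by
  obtain ⟨a, ha⟩ := WithTop.ne_top_iff_exists.mp (ne_top_of_le_ne_top WithTop.coe_ne_top h)
  rw [v.map_inv, ← ha, ← WithTop.LinearOrderedAddCommGroup.coe_neg]
  rw [← ha] at h
  exact_mod_cast (by norm_cast at h; omega : k ≤ -a)

theorem exists_coe_le_map_coeff (p : K[X]) : ∃ C : ℤ, ∀ i, (C : WithTop ℤ) ≤ v (p.coeff i) := by
  obtain ⟨C, hC⟩ := Finite.exists_ge fun i : p.support =>
    (v (p.coeff i)).untop ((v.ne_top_iff).mpr (mem_support_iff.mp i.2))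
  refine ⟨C, fun i => ?_⟩
  by_cases hi : i ∈ p.support
  · simpa using WithTop.coe_le_coe.mpr (hC ⟨i, hi⟩)
  · simp [notMem_support_iff.mp hi, v.map_zero]

theorem exists_le_map_eval_sub_eval (p : K[X]) (t₀ : K) (B : ℤ) :
    ∃ k : ℤ, ∀ t, (k : WithTop ℤ) ≤ v (t - t₀) → (B : WithTop ℤ) ≤ v (p.eval t - p.eval t₀) := by
  set q := divX (taylor t₀ p)
  obtain ⟨C, hC⟩ := v.exists_coe_le_map_coeff q
  refine ⟨max 0 (B - C), fun t ht => ?_⟩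
  have hfactor : p.eval t - p.eval t₀ = q.eval (t - t₀) * (t - t₀) := by
    have h := congrArg (eval (t - t₀)) (divX_mul_X_add (taylor t₀ p))
    rw [eval_add, eval_mul, eval_X, eval_C, taylor_coeff_zero, taylor_eval, sub_add_cancel] at h
    rw [← h, add_sub_cancel_right]
  rw [hfactor, v.map_mul]
  have hu : (0 : WithTop ℤ) ≤ v (t - t₀) := le_trans (by exact_mod_cast le_max_left _ _) ht
  calc (B : WithTop ℤ) ≤ (C : WithTop ℤ) + (max 0 (B - C) : ℤ) := by
        exact_mod_cast by omega
    _ ≤ v (q.eval (t - t₀)) + v (t - t₀) := add_le_add (v.le_map_eval_of_le_map_coeff hC hu) ht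

theorem newtonPowStep_spec {n : ℕ} {e k : ℤ} (he : v (n : K) = e) (hk : 0 ≤ k) {w a : K}
    (ha : v a = 0) (haw : ((2 * e + 1 + k : ℤ) : WithTop ℤ) ≤ v (a ^ n - w)) :
    ((e + 1 + k : ℤ) : WithTop ℤ) ≤ v (newtonPowStep n w a - a) ∧
      ((2 * e + 1 + (k + 1) : ℤ) : WithTop ℤ) ≤ v (newtonPowStep n w a ^ n - w) := by
  have hn : (n : K) ≠ 0 := (v.ne_top_iff).mp (by simp [he])
  have ha0 : a ≠ 0 := (v.ne_top_iff).mp (by simp [ha])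
  have he0 : 0 ≤ e := by exact_mod_cast he ▸ v.map_natCast_nonneg n
  set δ := (w - a ^ n) / (n * a ^ (n - 1)) with hδ
  have hstep : newtonPowStep n w a = a + δ := rfl
  have hlin : (n : K) * a ^ (n - 1) * δ = w - a ^ n := by
    rw [hδ]; field_simp
  have hvδ : ((e + 1 + k : ℤ) : WithTop ℤ) ≤ v δ := by
    have h := v.map_mul δ (n * a ^ (n - 1))
    rw [mul_comm δ, hlin, v.map_mul, v.map_pow, he, ha, smul_zero, add_zero, ← v.map_neg,
      neg_sub] at h
    rw [h, show ((2 * e + 1 + k : ℤ) : WithTop ℤ) = ((e + 1 + k : ℤ) : WithTop ℤ) + e by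
      norm_cast; ring] at haw
    exact (WithTop.add_le_add_iff_right WithTop.coe_ne_top).mp haw
  refine ⟨by rwa [hstep, add_sub_cancel_left], ?_⟩
  have hrem : newtonPowStep n w a ^ n - w = (a + δ) ^ n - a ^ n - n * a ^ (n - 1) * δ := by
    rw [hstep, hlin]; ring
  rw [hrem]
  refine le_trans ?_
    (v.map_sq_le_map_add_pow_sub (ha ▸ le_rfl) (le_trans (by exact_mod_cast by omega) hvδ) n)
  rw [v.map_pow]
  calc ((2 * e + 1 + (k + 1) : ℤ) : WithTop ℤ) ≤ 2 • ((e + 1 + k : ℤ) : WithTop ℤ) := by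
        rw [← WithTop.coe_nsmul, nsmul_eq_mul]; exact_mod_cast by omega
    _ ≤ 2 • v δ := nsmul_le_nsmul_right hvδ 2

theorem newtonPowStep_iterate_spec {n : ℕ} {e : ℤ} (he : v (n : K) = e) {w : K}
    (hw : ((2 * e + 1 : ℤ) : WithTop ℤ) ≤ v (w - 1)) (k : ℕ) :
    v ((newtonPowStep n w)^[k] 1) = 0 ∧
      ((2 * e + 1 + k : ℤ) : WithTop ℤ) ≤ v (((newtonPowStep n w)^[k] 1) ^ n - w) := by
  induction k with
  | zero => simpa [v.map_one, ← v.map_neg (w - 1)] using hw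
  | succ k ih =>
    obtain ⟨hδ, hnext⟩ := v.newtonPowStep_spec he (Int.natCast_nonneg k) ih.1 ih.2
    have he0 : 0 ≤ e := by exact_mod_cast he ▸ v.map_natCast_nonneg n
    rw [Function.iterate_succ_apply']
    refine ⟨?_, by exact_mod_cast hnext⟩
    rw [← add_sub_cancel ((newtonPowStep n w)^[k] 1) (newtonPowStep n w _),
      v.map_add_eq_of_lt_left, ih.1]
    exact ih.1 ▸ lt_of_lt_of_le (by exact_mod_cast (by omega : (0 : ℤ) < e + 1 + k)) hδ

end AddValuation

namespace MvPolynomial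

variable {R : Type*} [CommSemiring R]

theorem IsHomogeneous.eval_smul {σ : Type*} [Fintype σ] {p : MvPolynomial σ R} {d : ℕ}
    (hp : p.IsHomogeneous d) (c : R) (x : σ → R) : eval (c • x) p = c ^ d * eval x p := by
  rw [eval_eq', eval_eq', Finset.mul_sum]
  refine Finset.sum_congr rfl fun u hu => ?_
  have hdeg : ∑ i, u i = d := by
    rw [← hp (mem_support_iff.mp hu)]
    simp [Finsupp.weight_apply, Finsupp.sum_fintype]
  simp only [Pi.smul_apply, smul_eq_mul, mul_pow, Finset.prod_mul_distrib,
    Finset.prod_pow_eq_pow_sum, hdeg]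
  ring

theorem eval_rename_swap (p : MvPolynomial (Fin 2) R) (x y : R) :
    eval ![x, y] (rename (Equiv.swap 0 1) p) = eval ![y, x] p := by
  have hswap : ![x, y] ∘ Equiv.swap 0 1 = ![y, x] := by
    ext i; fin_cases i <;> rfl
  rw [eval_rename, hswap]

theorem eval_vecCons_one (p : MvPolynomial (Fin 2) R) (t : R) :
    eval ![t, 1] p = (aeval ![Polynomial.X, 1] p).eval t := by
  have hvec : (fun i => Polynomial.aeval t (![Polynomial.X, 1] i : R[X])) = ![t, 1] := by
    ext i; fin_cases i <;> simp
  rw [← Polynomial.coe_aeval_eq_eval, ← AlgHom.comp_apply, comp_aeval, hvec]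
  rfl

theorem IsHomogeneous.eval_eq_pow_mul_eval_div {K : Type*} [Field K]
    {p : MvPolynomial (Fin 2) K} {d : ℕ} (hp : p.IsHomogeneous d) (x : K) {y : K} (hy : y ≠ 0) :
    MvPolynomial.eval ![x, y] p =
      y ^ d * (MvPolynomial.aeval ![Polynomial.X, 1] p).eval (x / y) := by
  have hxy : ![x, y] = y • ![x / y, 1] := by
    ext i; fin_cases i <;> simp [mul_div_cancel₀ _ hy]
  rw [hxy, hp.eval_smul, MvPolynomial.eval_vecCons_one]

end MvPolynomial

namespace IsLocalField

variable {K : Type*} [Field K] {v : K → WithTop ℤ} {n : ℕ}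

theorem map_one (hK : IsLocalField v) : v 1 = 0 := by
  obtain ⟨a, ha⟩ := WithTop.ne_top_iff_exists.mp (hK.ne_top 1 one_ne_zero)
  have h := hK.map_mul 1 1
  rw [mul_one, ← ha, ← WithTop.coe_add, WithTop.coe_inj] at h
  rw [← ha]; exact_mod_cast (by omega : a = 0)

def toAddValuation (hK : IsLocalField v) : AddValuation K (WithTop ℤ) :=
  AddValuation.of v hK.map_zero hK.map_one hK.min_le_add hK.map_mul

theorem toAddValuation_apply (hK : IsLocalField v) (x : K) : hK.toAddValuation x = v x := rfl

theorem powEquiv_one_of_le_sub (hK : IsLocalField v) {e : ℤ} (he : v (n : K) = e) {w : K}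
    (hw : ((2 * e + 1 : ℤ) : WithTop ℤ) ≤ v (w - 1)) : PowEquiv n w 1 := by
  set V := hK.toAddValuation
  set a : ℕ → K := fun k => (newtonPowStep n w)^[k] 1
  have ha k : V (a k) = 0 ∧ ((2 * e + 1 + k : ℤ) : WithTop ℤ) ≤ V (a k ^ n - w) :=
    V.newtonPowStep_iterate_spec he hw k
  have hcauchy {m m' : ℕ} (hm : m ≤ m') : ((e + 1 + m : ℤ) : WithTop ℤ) ≤ V (a m' - a m) := by
    refine V.le_map_sub_of_le_map_sub_succ (fun k => ?_) hm
    have := (V.newtonPowStep_spec he (Int.natCast_nonneg k) (ha k).1 (ha k).2).1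
    simpa [a, Function.iterate_succ_apply'] using this
  obtain ⟨L, hL⟩ := hK.complete a fun k => by
    refine ⟨(k - e - 1).toNat, fun m m' hm hm' => ?_⟩
    change (k : WithTop ℤ) ≤ V (a m - a m')
    rcases le_total m m' with h | h
    · rw [V.map_sub_swap]
      exact le_trans (by exact_mod_cast by omega) (hcauchy h)
    · exact le_trans (by exact_mod_cast by omega) (hcauchy h)
  have hL0 : 0 ≤ V L := by
    obtain ⟨N, hN⟩ := hL 0
    rw [← sub_sub_cancel (a N) L]
    exact V.map_le_sub (ha N).1.ge (hN N le_rfl)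
  have hLw : L ^ n = w := by
    refine sub_eq_zero.mp (V.eq_zero_of_forall_coe_le fun k => ?_)
    obtain ⟨N, hN⟩ := hL k
    set m := max N (k - (2 * e + 1)).toNat
    rw [← sub_add_sub_cancel _ (a m ^ n)]
    refine V.map_le_add ?_ (le_trans (by exact_mod_cast by omega) (ha m).2)
    rw [V.map_sub_swap]
    exact le_trans (hN m (le_max_left _ _)) (V.map_sub_le_map_pow_sub_pow (ha m).1.ge hL0 n)
  have hn0 : n ≠ 0 := by rintro rfl; simp [hK.map_zero] at he
  have hw0 : w ≠ 0 := by
    rintro rfl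
    have he0 : (0 : WithTop ℤ) ≤ e := he ▸ V.map_natCast_nonneg n
    rw [zero_sub, ← toAddValuation_apply hK, V.map_neg, V.map_one] at hw
    exact absurd hw (by norm_cast at he0 ⊢; omega)
  exact ⟨L, fun h => hw0 (by rw [← hLw, h, zero_pow hn0]), by rw [mul_one, hLw]⟩

theorem powEquiv_of_le_sub (hK : IsLocalField v) {e : ℤ} (he : v (n : K) = e)
    {w c : K} (hc : c ≠ 0) (h : ((2 * e + 1 : ℤ) : WithTop ℤ) + v c ≤ v (w - c)) :
    PowEquiv n w c := by
  have hquot : v ((w - c) / c) + v c = v (w - c) := by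
    rw [← hK.map_mul, div_mul_cancel₀ _ hc]
  rw [← hquot, WithTop.add_le_add_iff_right (hK.ne_top c hc), sub_div, div_self hc] at h
  simpa [hc] using (hK.powEquiv_one_of_le_sub he h).mul (PowEquiv.refl n c)

theorem exists_powEquiv_eval_of_eval_ne_zero (hK : IsLocalField v) (hn : (n : K) ≠ 0)
    (h : K[X]) (t₀ : K) (h0 : h.eval t₀ ≠ 0) :
    ∃ k : ℤ, ∀ t, (k : WithTop ℤ) ≤ v (t - t₀) → PowEquiv n (h.eval t) (h.eval t₀) := by
  obtain ⟨e, he⟩ := WithTop.ne_top_iff_exists.mp (hK.ne_top _ hn)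
  obtain ⟨c, hc⟩ := WithTop.ne_top_iff_exists.mp (hK.ne_top _ h0)
  obtain ⟨k, hk⟩ := hK.toAddValuation.exists_le_map_eval_sub_eval h t₀ (2 * e + 1 + c)
  refine ⟨k, fun t ht => hK.powEquiv_of_le_sub he.symm h0 ?_⟩
  rw [← hc]
  exact_mod_cast hk t ht

theorem exists_powEquiv_eval (hK : IsLocalField v) (hn : (n : K) ≠ 0) (f : K[X]) (t₀ : K) :
    ∃ k : ℤ, ∀ t₁ t₂, (k : WithTop ℤ) ≤ v (t₁ - t₀) → (k : WithTop ℤ) ≤ v (t₂ - t₀) →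
      PowEquiv n (t₁ - t₀) (t₂ - t₀) → PowEquiv n (f.eval t₁) (f.eval t₂) := by
  by_cases hf : f = 0
  · exact ⟨0, fun _ _ _ _ _ => by simpa [hf] using PowEquiv.refl n (0 : K)⟩
  set m := f.rootMultiplicity t₀
  set h := f /ₘ (X - C t₀) ^ m
  have hfac t : f.eval t = (t - t₀) ^ m * h.eval t := by
    conv_lhs => rw [← pow_mul_divByMonic_rootMultiplicity_eq f t₀]
    simp [h, m]
  obtain ⟨k, hk⟩ := hK.exists_powEquiv_eval_of_eval_ne_zero hn h t₀
    (eval_divByMonic_pow_rootMultiplicity_ne_zero t₀ hf)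
  refine ⟨k, fun t₁ t₂ h₁ h₂ hrel => ?_⟩
  rw [hfac, hfac]
  exact (hrel.pow m).mul ((hk t₁ h₁).trans (hk t₂ h₂).symm)

theorem exists_powEquiv_eval_of_isHomogeneous (hK : IsLocalField v) (hn : (n : K) ≠ 0)
    {p : MvPolynomial (Fin 2) K} {d : ℕ} (hp : p.IsHomogeneous d) (t₀ : K) :
    ∃ k : ℤ, ∀ x₁ y₁ x₂ y₂ : K, y₁ ≠ 0 → y₂ ≠ 0 →
      (k : WithTop ℤ) ≤ v (x₁ / y₁ - t₀) → (k : WithTop ℤ) ≤ v (x₂ / y₂ - t₀) →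
      PowEquiv n (x₁ - t₀ * y₁) (x₂ - t₀ * y₂) → PowEquiv n y₁ y₂ →
      PowEquiv n (MvPolynomial.eval ![x₁, y₁] p) (MvPolynomial.eval ![x₂, y₂] p) := by
  obtain ⟨k, hk⟩ := hK.exists_powEquiv_eval hn (MvPolynomial.aeval ![X, 1] p) t₀
  refine ⟨k, fun x₁ y₁ x₂ y₂ hy₁ hy₂ h₁ h₂ hx hy => ?_⟩
  have hdiv {x y : K} (hy : y ≠ 0) : x / y - t₀ = (x - t₀ * y) / y := by field_simp
  rw [hp.eval_eq_pow_mul_eval_div _ hy₁, hp.eval_eq_pow_mul_eval_div _ hy₂]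
  refine (hy.pow d).mul (hk _ _ h₁ h₂ ?_)
  rw [hdiv hy₁, hdiv hy₂]
  exact hx.div hy

theorem exists_prod_eq (hK : IsLocalField v) (hn : (n : K) ≠ 0) {ι M : Type*} [Fintype ι]
    [CommMonoid M] (g : ι → K → K → M)
    (hg : ∀ (j : ι) (a b s t : K), s ≠ 0 → t ≠ 0 → g j (s ^ n * a) (t ^ n * b) = g j a b)
    (P Q : ι → MvPolynomial (Fin 2) K)
    (hPhom : ∀ j, ∃ d : ℕ, (P j).IsHomogeneous d) (hQhom : ∀ j, ∃ d : ℕ, (Q j).IsHomogeneous d)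
    (t₀ : K) :
    ∃ k : ℤ, ∀ x₁ y₁ x₂ y₂ : K, y₁ ≠ 0 → y₂ ≠ 0 →
      (k : WithTop ℤ) ≤ v (x₁ / y₁ - t₀) → (k : WithTop ℤ) ≤ v (x₂ / y₂ - t₀) →
      PowEquiv n (x₁ - t₀ * y₁) (x₂ - t₀ * y₂) → PowEquiv n y₁ y₂ →
      ∏ j, g j (MvPolynomial.eval ![x₁, y₁] (P j)) (MvPolynomial.eval ![x₁, y₁] (Q j)) =
        ∏ j, g j (MvPolynomial.eval ![x₂, y₂] (P j)) (MvPolynomial.eval ![x₂, y₂] (Q j)) := by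
  choose kP hkP using fun j =>
    hK.exists_powEquiv_eval_of_isHomogeneous hn (hPhom j).choose_spec t₀
  choose kQ hkQ using fun j =>
    hK.exists_powEquiv_eval_of_isHomogeneous hn (hQhom j).choose_spec t₀
  obtain ⟨k, hk⟩ := Finite.exists_le fun j => max (kP j) (kQ j)
  refine ⟨k, fun x₁ y₁ x₂ y₂ hy₁ hy₂ h₁ h₂ hx hy => Finset.prod_congr rfl fun j _ => ?_⟩
  have hle {k' : ℤ} (hk' : k' ≤ max (kP j) (kQ j)) {x y : K}
      (h : (k : WithTop ℤ) ≤ v (x / y - t₀)) : (k' : WithTop ℤ) ≤ v (x / y - t₀) :=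
    le_trans (by exact_mod_cast hk'.trans (hk j)) h
  obtain ⟨s, hs, hsP⟩ := hkP j x₁ y₁ x₂ y₂ hy₁ hy₂
    (hle (le_max_left _ _) h₁) (hle (le_max_left _ _) h₂) hx hy
  obtain ⟨t, ht, htQ⟩ := hkQ j x₁ y₁ x₂ y₂ hy₁ hy₂
    (hle (le_max_right _ _) h₁) (hle (le_max_right _ _) h₂) hx hy
  rw [hsP, htQ, hg j _ _ s t hs ht]

end IsLocalField

theorem stmt8_general {K : Type*} [Field K] (v : K → WithTop ℤ) (hK : IsLocalField v)
    (n : ℕ) (hn : 0 < n) (hchar : ringChar K = 0 ∨ ¬ (ringChar K ∣ n))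
    (r : ℕ) (g : Fin r → K → K → ℂ)
    (hg : ∀ (j : Fin r) (a b s t : K), s ≠ 0 → t ≠ 0 →
      g j (s ^ n * a) (t ^ n * b) = g j a b)
    (P Q : Fin r → MvPolynomial (Fin 2) K)
    (hPhom : ∀ j, ∃ d : ℕ, (P j).IsHomogeneous d)
    (hQhom : ∀ j, ∃ d : ℕ, (Q j).IsHomogeneous d) :
    (∀ t₀ : K, ∃ k : ℤ, ∀ x₁ y₁ x₂ y₂ : K,
        min (v x₁) (v y₁) = 0 → min (v x₂) (v y₂) = 0 →
        y₁ ≠ 0 → y₂ ≠ 0 → x₁ / y₁ ≠ t₀ → x₂ / y₂ ≠ t₀ →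
        (k : WithTop ℤ) ≤ v (x₁ / y₁ - t₀) → (k : WithTop ℤ) ≤ v (x₂ / y₂ - t₀) →
        (∀ j, MvPolynomial.eval ![x₁, y₁] (P j) ≠ 0 ∧
          MvPolynomial.eval ![x₁, y₁] (Q j) ≠ 0) →
        (∀ j, MvPolynomial.eval ![x₂, y₂] (P j) ≠ 0 ∧
          MvPolynomial.eval ![x₂, y₂] (Q j) ≠ 0) →
        (∃ s : K, s ≠ 0 ∧ x₁ - t₀ * y₁ = s ^ n * (x₂ - t₀ * y₂)) →
        (∃ s : K, s ≠ 0 ∧ y₁ = s ^ n * y₂) →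
        (∏ j, g j (MvPolynomial.eval ![x₁, y₁] (P j))
            (MvPolynomial.eval ![x₁, y₁] (Q j))) =
          ∏ j, g j (MvPolynomial.eval ![x₂, y₂] (P j))
            (MvPolynomial.eval ![x₂, y₂] (Q j)))
    ∧ (∃ k : ℤ, ∀ x₁ y₁ x₂ y₂ : K,
        min (v x₁) (v y₁) = 0 → min (v x₂) (v y₂) = 0 →
        y₁ ≠ 0 → y₂ ≠ 0 →
        v (x₁ / y₁) ≤ (k : WithTop ℤ) → v (x₂ / y₂) ≤ (k : WithTop ℤ) →
        (∀ j, MvPolynomial.eval ![x₁, y₁] (P j) ≠ 0 ∧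
          MvPolynomial.eval ![x₁, y₁] (Q j) ≠ 0) →
        (∀ j, MvPolynomial.eval ![x₂, y₂] (P j) ≠ 0 ∧
          MvPolynomial.eval ![x₂, y₂] (Q j) ≠ 0) →
        (∃ s : K, s ≠ 0 ∧ x₁ = s ^ n * x₂) →
        (∃ s : K, s ≠ 0 ∧ y₁ = s ^ n * y₂) →
        (∏ j, g j (MvPolynomial.eval ![x₁, y₁] (P j))
            (MvPolynomial.eval ![x₁, y₁] (Q j))) =
          ∏ j, g j (MvPolynomial.eval ![x₂, y₂] (P j))
            (MvPolynomial.eval ![x₂, y₂] (Q j))) := by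
  have hnK : (n : K) ≠ 0 := by
    rw [Ne, CharP.cast_eq_zero_iff K (ringChar K)]
    rcases hchar with h | h
    · rw [h, zero_dvd_iff]; exact hn.ne'
    · exact h
  refine ⟨fun t₀ => ?_, ?_⟩
  · obtain ⟨k, hk⟩ := hK.exists_prod_eq hnK g hg P Q hPhom hQhom t₀
    exact ⟨k, fun x₁ y₁ x₂ y₂ _ _ hy₁ hy₂ _ _ h₁ h₂ _ _ => hk x₁ y₁ x₂ y₂ hy₁ hy₂ h₁ h₂⟩
  · let swap := MvPolynomial.rename (R := K) (Equiv.swap (0 : Fin 2) 1)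
    obtain ⟨k, hk⟩ := hK.exists_prod_eq hnK g hg (swap ∘ P) (swap ∘ Q)
      (fun j => (hPhom j).imp fun _ h => h.rename_isHomogeneous)
      (fun j => (hQhom j).imp fun _ h => h.rename_isHomogeneous) 0
    refine ⟨-k, fun x₁ y₁ x₂ y₂ _ _ hy₁ hy₂ h₁ h₂ _ _ hx hy => ?_⟩
    have hx0 {x y : K} (h : v (x / y) ≤ ((-k : ℤ) : WithTop ℤ)) : x ≠ 0 := by
      rintro rfl; simp [hK.map_zero] at h
    have hinv {x y : K} (h : v (x / y) ≤ ((-k : ℤ) : WithTop ℤ)) :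
        (k : WithTop ℤ) ≤ v (y / x - 0) := by
      rw [sub_zero, ← inv_div]
      exact hK.toAddValuation.le_map_inv h
    simpa [swap, MvPolynomial.eval_rename_swap] using
      hk y₁ x₁ y₂ x₂ (hx0 h₁) (hx0 h₂) (hinv h₁) (hinv h₂)
        (by simpa only [PowEquiv, zero_mul, sub_zero] using hy) hx

/-- Let `K` be a local field and `n` a positive integer with `char K ∤ n`.
Let `g(x,y) = ∏_{j=1}^r g_j(P_j(x,y), Q_j(x,y))`, where each `g_j` is a function
`K^*/(K^*)^n × K^*/(K^*)^n → ℂ` and `P_j, Q_j ∈ K[x,y]` are nonzero homogeneous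
polynomials.  Let `R = {(x,y) ∈ K × K : min(v x, v y) = 0}`.  Then for every
`t₀ ∈ ℙ¹(K)` there is a punctured neighbourhood `U_{t₀}` of `t₀` such that, for all
`(x,y) ∈ R` with `x/y ∈ U_{t₀}` at which `g` is defined, the value of `g(x,y)` depends
only on the classes of `x − t₀·y` and of `y` in `K^*/(K^*)^n` (only on the classes of
`x` and of `y` if `t₀ = ∞`). -/
theorem stmt8 {K : Type*} [Field K] (v : K → WithTop ℤ) (hK : IsLocalField v)
    (n : ℕ) (hn : 0 < n) (hchar : ringChar K = 0 ∨ ¬ (ringChar K ∣ n))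
    (r : ℕ) (g : Fin r → K → K → ℂ)
    (hg : ∀ (j : Fin r) (a b s t : K), s ≠ 0 → t ≠ 0 →
      g j (s ^ n * a) (t ^ n * b) = g j a b)
    (P Q : Fin r → MvPolynomial (Fin 2) K)
    (hP : ∀ j, P j ≠ 0) (hQ : ∀ j, Q j ≠ 0)
    (hPhom : ∀ j, ∃ d : ℕ, (P j).IsHomogeneous d)
    (hQhom : ∀ j, ∃ d : ℕ, (Q j).IsHomogeneous d) :
    (∀ t₀ : K, ∃ k : ℤ, ∀ x₁ y₁ x₂ y₂ : K,
        min (v x₁) (v y₁) = 0 → min (v x₂) (v y₂) = 0 →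
        y₁ ≠ 0 → y₂ ≠ 0 → x₁ / y₁ ≠ t₀ → x₂ / y₂ ≠ t₀ →
        (k : WithTop ℤ) ≤ v (x₁ / y₁ - t₀) → (k : WithTop ℤ) ≤ v (x₂ / y₂ - t₀) →
        (∀ j, MvPolynomial.eval ![x₁, y₁] (P j) ≠ 0 ∧
          MvPolynomial.eval ![x₁, y₁] (Q j) ≠ 0) →
        (∀ j, MvPolynomial.eval ![x₂, y₂] (P j) ≠ 0 ∧
          MvPolynomial.eval ![x₂, y₂] (Q j) ≠ 0) →
        (∃ s : K, s ≠ 0 ∧ x₁ - t₀ * y₁ = s ^ n * (x₂ - t₀ * y₂)) →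
        (∃ s : K, s ≠ 0 ∧ y₁ = s ^ n * y₂) →
        (∏ j, g j (MvPolynomial.eval ![x₁, y₁] (P j))
            (MvPolynomial.eval ![x₁, y₁] (Q j))) =
          ∏ j, g j (MvPolynomial.eval ![x₂, y₂] (P j))
            (MvPolynomial.eval ![x₂, y₂] (Q j)))
    ∧ (∃ k : ℤ, ∀ x₁ y₁ x₂ y₂ : K,
        min (v x₁) (v y₁) = 0 → min (v x₂) (v y₂) = 0 →
        y₁ ≠ 0 → y₂ ≠ 0 →
        v (x₁ / y₁) ≤ (k : WithTop ℤ) → v (x₂ / y₂) ≤ (k : WithTop ℤ) →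
        (∀ j, MvPolynomial.eval ![x₁, y₁] (P j) ≠ 0 ∧
          MvPolynomial.eval ![x₁, y₁] (Q j) ≠ 0) →
        (∀ j, MvPolynomial.eval ![x₂, y₂] (P j) ≠ 0 ∧
          MvPolynomial.eval ![x₂, y₂] (Q j) ≠ 0) →
        (∃ s : K, s ≠ 0 ∧ x₁ = s ^ n * x₂) →
        (∃ s : K, s ≠ 0 ∧ y₁ = s ^ n * y₂) →
        (∏ j, g j (MvPolynomial.eval ![x₁, y₁] (P j))
            (MvPolynomial.eval ![x₁, y₁] (Q j))) =
          ∏ j, g j (MvPolynomial.eval ![x₂, y₂] (P j))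
            (MvPolynomial.eval ![x₂, y₂] (Q j))) :=
  stmt8_general v hK n hn hchar r g hg P Q hPhom hQhom
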